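/- arXiv:2004.06348 — 2 statements merged into one kernel-verified Lean document; each statement's English description precedes it below -/
import Mathlib

section
/- Along SI-PPSP with zero-mean independent noises β_i(k) of variance v_i(k)², the expected value of the estimator y_i(k) = ∑_{r=0}^{n−1} x_i(k+r) equals ∑_{j=1}^n s_j for all i and k, where x(k) = A^k s + ∑_{m=0}^{k−1} A^m(I − A)β(k−1−m) and A is the cyclic shift matrix. -/
/-!
The noise terms have mean zero, so by linearity of expectation `𝔼 x(k) = A^k s`, which is `s`
cyclically shifted by `k`. Summing `n` consecutive shifts at a fixed coordinate visits every
entry of `s` exactly once.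
-/

open MeasureTheory ProbabilityTheory Matrix

section CyclicShift

open Fin.CommRing

variable {R : Type*} [Semiring R] {n : ℕ}

def Matrix.IsCyclicShift (A : Matrix (Fin n) (Fin n) R) : Prop :=
  ∀ i j, A i j = if (i : ℕ) = ((j : ℕ) + 1) % n then 1 else 0

variable [NeZero n] {A : Matrix (Fin n) (Fin n) R}

lemma Fin.val_eq_val_add_one_mod_iff (i j : Fin n) :
    (i : ℕ) = ((j : ℕ) + 1) % n ↔ i = j + 1 := by
  rw [Fin.ext_iff, Fin.val_add, Fin.val_one', Nat.add_mod_mod]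

lemma Matrix.IsCyclicShift.mulVec_apply (hA : A.IsCyclicShift) (v : Fin n → R) (i : Fin n) :
    (A *ᵥ v) i = v (i - 1) := by
  simp only [Matrix.mulVec, dotProduct, hA i, Fin.val_eq_val_add_one_mod_iff, ite_mul, one_mul,
    zero_mul, eq_comm (a := i), ← eq_sub_iff_add_eq, Finset.sum_ite_eq', Finset.mem_univ, if_true]

lemma Matrix.IsCyclicShift.pow_mulVec_apply (hA : A.IsCyclicShift) (m : ℕ) (v : Fin n → R)
    (i : Fin n) : (A ^ m *ᵥ v) i = v (i - m) := by
  induction m generalizing v i with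
  | zero => simp
  | succ m ih =>
    rw [pow_succ, ← Matrix.mulVec_mulVec, ih, hA.mulVec_apply]
    push_cast
    ring_nf

lemma Fin.sum_range_comp_sub {M : Type*} [AddCommMonoid M] (f : Fin n → M) (a : Fin n) :
    ∑ r ∈ Finset.range n, f (a - r) = ∑ j, f j := by
  rw [← Fin.sum_univ_eq_sum_range (fun r => f (a - r))]
  simp only [Fin.cast_val_eq_self]
  exact Equiv.sum_comp (Equiv.subLeft a) f

lemma Matrix.IsCyclicShift.sum_range_pow_add_mulVec_apply (hA : A.IsCyclicShift) (k : ℕ)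
    (v : Fin n → R) (i : Fin n) : ∑ r ∈ Finset.range n, (A ^ (k + r) *ᵥ v) i = ∑ j, v j := by
  simp_rw [hA.pow_mulVec_apply, Nat.cast_add, ← sub_sub]
  exact Fin.sum_range_comp_sub v (i - k)

end CyclicShift

section Expectation

variable {Ω ι κ : Type*} [Fintype ι] [MeasurableSpace Ω] {μ : Measure Ω}

lemma integrable_mulVec_apply {ξ : Ω → ι → ℝ} (hξ : ∀ j, Integrable (fun ω => ξ ω j) μ)
    (M : Matrix κ ι ℝ) (i : κ) : Integrable (fun ω => (M *ᵥ ξ ω) i) μ :=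
  integrable_finsetSum _ fun j _ => (hξ j).const_mul (M i j)

lemma integral_mulVec_apply {ξ : Ω → ι → ℝ} (hξ : ∀ j, Integrable (fun ω => ξ ω j) μ)
    (M : Matrix κ ι ℝ) (i : κ) :
    ∫ ω, (M *ᵥ ξ ω) i ∂μ = (M *ᵥ fun j => ∫ ω, ξ ω j ∂μ) i := by
  simp only [Matrix.mulVec, dotProduct]
  rw [integral_finsetSum _ fun j _ => (hξ j).const_mul (M i j)]
  simp only [integral_const_mul]

variable [IsFiniteMeasure μ] {ξ : ℕ → Ω → ι → ℝ} (c : κ → ℝ) (B : ℕ → Matrix κ ι ℝ)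
  (S : Finset ℕ) (i : κ)

lemma integrable_add_sum_mulVec_apply (hξ : ∀ m j, Integrable (fun ω => ξ m ω j) μ) :
    Integrable (fun ω => (c + ∑ m ∈ S, B m *ᵥ ξ m ω) i) μ := by
  simp only [Pi.add_apply, Finset.sum_apply]
  exact (integrable_const _).add
    (integrable_finsetSum _ fun m _ => integrable_mulVec_apply (hξ m) (B m) i)

lemma integral_add_sum_mulVec_apply_of_integral_eq_zero
    (hξ : ∀ m j, Integrable (fun ω => ξ m ω j) μ) (hmean : ∀ m j, ∫ ω, ξ m ω j ∂μ = 0) :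
    ∫ ω, (c + ∑ m ∈ S, B m *ᵥ ξ m ω) i ∂μ = μ.real Set.univ * c i := by
  simp only [Pi.add_apply, Finset.sum_apply]
  rw [integral_add (integrable_const _)
      (integrable_finsetSum _ fun m _ => integrable_mulVec_apply (hξ m) (B m) i),
    integral_finsetSum _ fun m _ => integrable_mulVec_apply (hξ m) (B m) i]
  simp [integral_mulVec_apply (hξ _), hmean, ← Pi.zero_def]

end Expectation

theorem expectation_of_estimator_general {Ω : Type*} [MeasurableSpace Ω]
    (μ : Measure Ω) [IsProbabilityMeasure μ] (n : ℕ)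
    (A : Matrix (Fin n) (Fin n) ℝ)
    (hA : ∀ i j, A i j = if (i : ℕ) = ((j : ℕ) + 1) % n then 1 else 0)
    (s : Fin n → ℝ) (β : ℕ → Ω → Fin n → ℝ)
    (hint : ∀ k i, Integrable (fun ω => β k ω i) μ)
    (hmean : ∀ k i, ∫ ω, β k ω i ∂μ = 0)
    (x : ℕ → Ω → Fin n → ℝ)
    (hx : ∀ k ω, x k ω = (A ^ k).mulVec s
      + ∑ m ∈ Finset.range k, ((A ^ m) * (1 - A)).mulVec (β (k - 1 - m) ω))
    (y : ℕ → Ω → Fin n → ℝ)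
    (hy : ∀ k ω i, y k ω i = ∑ r ∈ Finset.range n, x (k + r) ω i) :
    ∀ (i : Fin n) (k : ℕ), ∫ ω, y k ω i ∂μ = ∑ j, s j := by
  intro i k
  have : NeZero n := ⟨i.pos.ne'⟩
  have hx_apply (k : ℕ) : (fun ω => x k ω i) = fun ω =>
      (A ^ k *ᵥ s + ∑ m ∈ Finset.range k, (A ^ m * (1 - A)) *ᵥ β (k - 1 - m) ω : Fin n → ℝ) i := by
    funext ω
    rw [hx]
  have hx_int (k : ℕ) : Integrable (fun ω => x k ω i) μ := by
    rw [hx_apply]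
    exact integrable_add_sum_mulVec_apply _ _ _ _ fun m => hint _
  have hx_mean (k : ℕ) : ∫ ω, x k ω i ∂μ = (A ^ k *ᵥ s) i := by
    rw [hx_apply, integral_add_sum_mulVec_apply_of_integral_eq_zero _ _ _ _ (fun m => hint _)
      fun m => hmean _, probReal_univ, one_mul]
  simp only [hy]
  rw [integral_finsetSum _ fun r _ => hx_int (k + r)]
  simp only [hx_mean]
  exact Matrix.IsCyclicShift.sum_range_pow_add_mulVec_apply hA k s i

theorem expectation_of_estimator {Ω : Type*} [MeasurableSpace Ω]
    (μ : Measure Ω) [IsProbabilityMeasure μ] (n : ℕ) (hn : 1 ≤ n)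
    (A : Matrix (Fin n) (Fin n) ℝ)
    (hA : ∀ i j, A i j = if (i : ℕ) = ((j : ℕ) + 1) % n then 1 else 0)
    (s : Fin n → ℝ) (β : ℕ → Ω → Fin n → ℝ)
    (hint : ∀ k i, Integrable (fun ω => β k ω i) μ)
    (hmean : ∀ k i, ∫ ω, β k ω i ∂μ = 0)
    (hindep : iIndepFun (fun (p : ℕ × Fin n) ω => β p.1 ω p.2) μ)
    (x : ℕ → Ω → Fin n → ℝ)
    (hx : ∀ k ω, x k ω = (A ^ k).mulVec s
      + ∑ m ∈ Finset.range k, ((A ^ m) * (1 - A)).mulVec (β (k - 1 - m) ω))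
    (y : ℕ → Ω → Fin n → ℝ)
    (hy : ∀ k ω i, y k ω i = ∑ r ∈ Finset.range n, x (k + r) ω i) :
    ∀ (i : Fin n) (k : ℕ), ∫ ω, y k ω i ∂μ = ∑ j, s j :=
  expectation_of_estimator_general μ n A hA s β hint hmean x hx y hy
end

section
/- Along the recursion x(k+1) = Ax(k) + (I−A)β(k) with A the n×n cyclic shift matrix and independent zero-mean noise vectors β(k) with independent components of variance at most σ_M(k)², the trace of the covariance of y(k) = ∑_{r=0}^{n−1} x(k+r) satisfies tr(cov(y(k))) ≤ 2n ∑_{l=k}^{k+n−1} ∑_{m=0}^{l−1} σ_M(l−1−m)². -/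
/-!
The cyclic shift is the permutation matrix of `σ = (finRotate n).symm`, so the `i`-th coordinate
of `A ^ m * (1 - A)` applied to `v` is `v (σ^[m] i) - v (σ^[m + 1] i)`. Regrouping the double sum
defining `y k` by the time index `t` of the noise, these differences telescope: the `i`-th
coordinate of `y k` is a constant plus `∑_{t < k + n - 1} (β t (σ^[k-1-t] i) - β t (σ^[k+n-1-t] i))`.
By independence each summand has variance at most `2 σM t ^ 2`, and summing over the `n`
coordinates gives `2 n ∑_{t < k + n - 1} σM t ^ 2`, which is the single term `l = k + n - 1` of the
claimed bound.
-/

open MeasureTheory ProbabilityTheory Finset Matrix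

lemma Fin.val_finRotate {n : ℕ} (j : Fin n) : (finRotate n j : ℕ) = (j + 1) % n := by
  have := j.neZero
  rw [finRotate_apply, Fin.val_add, Fin.val_one', Nat.add_mod_mod]

lemma eq_permMatrix_finRotate_symm {R : Type*} [Zero R] [One R] {n : ℕ}
    {A : Matrix (Fin n) (Fin n) R}
    (hA : ∀ i j, A i j = if (i : ℕ) = ((j : ℕ) + 1) % n then 1 else 0) :
    A = Equiv.Perm.permMatrix R (finRotate n).symm := by
  ext i j
  simp only [hA, Equiv.Perm.permMatrix, PEquiv.toMatrix_apply, Equiv.toPEquiv_apply,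
    Option.mem_some_iff, Equiv.symm_apply_eq, Fin.ext_iff, Fin.val_finRotate]

namespace Equiv.Perm

variable {ι R : Type*} [Fintype ι] [DecidableEq ι] [CommRing R] (σ : Equiv.Perm ι)

lemma permMatrix_pow_mulVec (m : ℕ) (v : ι → R) : σ.permMatrix R ^ m *ᵥ v = v ∘ σ^[m] := by
  induction m with
  | zero => simp
  | succ m ih => rw [pow_succ', ← mulVec_mulVec, ih, permMatrix_mulVec, Function.iterate_succ]; rfl

lemma permMatrix_pow_mul_one_sub_mulVec_apply (m : ℕ) (v : ι → R) (i : ι) :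
    ((σ.permMatrix R ^ m * (1 - σ.permMatrix R)) *ᵥ v) i = v (σ^[m] i) - v (σ^[m + 1] i) := by
  rw [← mulVec_mulVec, permMatrix_pow_mulVec, sub_mulVec, one_mulVec, permMatrix_mulVec]
  simp [Function.iterate_succ_apply']

end Equiv.Perm

/-- `k - 1 - t` truncates to `0` for `t ≥ k`, where the summand is `g t 0 - g t (k + n - 1 - t)`. -/
theorem Finset.sum_range_sum_range_sub_telescope {G : Type*} [AddCommGroup G] (g : ℕ → ℕ → G)
    (k : ℕ) {n : ℕ} (hn : n ≠ 0) :
    ∑ r ∈ range n, ∑ m ∈ range (k + r), (g (k + r - 1 - m) m - g (k + r - 1 - m) (m + 1)) =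
      ∑ t ∈ range (k + n - 1), (g t (k - 1 - t) - g t (k + n - 1 - t)) := by
  have reflect (l : ℕ) : ∑ m ∈ range l, (g (l - 1 - m) m - g (l - 1 - m) (m + 1)) =
      ∑ t ∈ range l, (g t (l - 1 - t) - g t (l - t)) := by
    rw [← sum_range_reflect]
    refine sum_congr rfl fun m hm => ?_
    have : m < l := mem_range.mp hm
    rw [show l - 1 - (l - 1 - m) = m by omega, show l - 1 - m + 1 = l - m by omega]
  obtain ⟨n, rfl⟩ := Nat.exists_eq_add_one_of_ne_zero hn
  simp_rw [reflect, ← add_assoc, Nat.add_sub_cancel]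
  clear hn
  induction n with
  | zero => simp
  | succ n ih =>
    have extend : ∑ t ∈ range (k + n), (g t (k - 1 - t) - g t (k + n - t)) =
        ∑ t ∈ range (k + n + 1), (g t (k - 1 - t) - g t (k + n - t)) := by
      simp [sum_range_succ, show k - 1 - (k + n) = 0 by omega]
    rw [sum_range_succ, ih, extend]
    simp only [← add_assoc, Nat.add_sub_cancel, ← sum_add_distrib, sub_add_sub_cancel]

lemma Equiv.Perm.sum_range_trajectory_apply {ι R : Type*} [Fintype ι] [DecidableEq ι]
    [CommRing R] (σ : Equiv.Perm ι) (s : ι → R) (b : ℕ → ι → R) (k : ℕ) {n : ℕ} (hn : n ≠ 0)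
    (i : ι) :
    ∑ r ∈ range n, (σ.permMatrix R ^ (k + r) *ᵥ s + ∑ m ∈ range (k + r),
        (σ.permMatrix R ^ m * (1 - σ.permMatrix R)) *ᵥ b (k + r - 1 - m) : ι → R) i =
      ∑ r ∈ range n, s (σ^[k + r] i) +
        ∑ t ∈ range (k + n - 1), (b t (σ^[k - 1 - t] i) - b t (σ^[k + n - 1 - t] i)) := by
  simp only [Pi.add_apply, Finset.sum_apply, σ.permMatrix_pow_mulVec, Function.comp_apply,
    σ.permMatrix_pow_mul_one_sub_mulVec_apply, sum_add_distrib]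
  rw [sum_range_sum_range_sub_telescope (fun t m => b t (σ^[m] i)) k hn]

lemma Finset.sum_range_le_sum_Ico_sum_range {M : Type*} [AddCommMonoid M] [PartialOrder M]
    [IsOrderedAddMonoid M] {f : ℕ → M} (hf : ∀ t, 0 ≤ f t) (k : ℕ) {n : ℕ} (hn : n ≠ 0) :
    ∑ t ∈ range (k + n - 1), f t ≤ ∑ l ∈ Ico k (k + n), ∑ m ∈ range l, f (l - 1 - m) := by
  simp_rw [sum_range_reflect f]
  exact single_le_sum (f := fun l => ∑ t ∈ range l, f t) (fun l _ => sum_nonneg fun t _ => hf t)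
    (mem_Ico.mpr ⟨by omega, by omega⟩)

lemma variance_sum_sub_le {Ω κ ι : Type*} [MeasurableSpace Ω] {μ : Measure Ω}
    {X : κ × ι → Ω → ℝ} (hX : ∀ p, MemLp (X p) 2 μ) (hindep : iIndepFun X μ)
    (T : Finset κ) (a b : κ → ι) :
    Var[∑ t ∈ T, (X (t, a t) - X (t, b t)); μ] ≤
      ∑ t ∈ T, (Var[X (t, a t); μ] + Var[X (t, b t); μ]) := by
  have := hindep.isProbabilityMeasure
  have hmeas (p : κ × ι) : AEMeasurable (X p) μ := (hX p).aemeasurable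
  rw [IndepFun.variance_sum (fun t _ => (hX _).sub (hX _)) fun t _ s _ hts =>
    (hindep.indepFun_prodMk_prodMk₀ hmeas _ _ _ _ (by simp [hts]) (by simp [hts]) (by simp [hts])
      (by simp [hts])).comp measurable_sub measurable_sub]
  refine sum_le_sum fun t _ => ?_
  by_cases hab : a t = b t
  · rw [hab, sub_self, variance_zero]
    exact add_nonneg (variance_nonneg _ _) (variance_nonneg _ _)
  · rw [variance_sub (hX _) (hX _),
      (hindep.indepFun (by simp [hab])).covariance_eq_zero (hX _) (hX _)]
    simp

theorem trace_cov_of_estimator_general {Ω : Type*} [MeasurableSpace Ω]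
    (μ : Measure Ω) [IsProbabilityMeasure μ] (n : ℕ)
    (A : Matrix (Fin n) (Fin n) ℝ)
    (hA : ∀ i j, A i j = if (i : ℕ) = ((j : ℕ) + 1) % n then 1 else 0)
    (s : Fin n → ℝ) (β : ℕ → Ω → Fin n → ℝ) (σM : ℕ → ℝ)
    (hL2 : ∀ k i, MemLp (fun ω => β k ω i) 2 μ)
    (hvar : ∀ k i, variance (fun ω => β k ω i) μ ≤ (σM k) ^ 2)
    (hindep : iIndepFun
      (fun (p : ℕ × Fin n) ω => β p.1 ω p.2) μ)
    (x : ℕ → Ω → Fin n → ℝ)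
    (hx : ∀ k ω, x k ω = (A ^ k).mulVec s
      + ∑ m ∈ Finset.range k, ((A ^ m) * (1 - A)).mulVec (β (k - 1 - m) ω))
    (y : ℕ → Ω → Fin n → ℝ)
    (hy : ∀ k ω i, y k ω i = ∑ r ∈ Finset.range n, x (k + r) ω i) :
    ∀ k : ℕ, ∑ i, variance (fun ω => y k ω i) μ
      ≤ 2 * n * ∑ l ∈ Finset.Ico k (k + n),
          ∑ m ∈ Finset.range l, (σM (l - 1 - m)) ^ 2 := by
  intro k
  obtain rfl := eq_permMatrix_finRotate_symm hA
  set σ : Equiv.Perm (Fin n) := (finRotate n).symm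
  set X : ℕ × Fin n → Ω → ℝ := fun p ω => β p.1 ω p.2
  have hcoord (i : Fin n) : Var[fun ω => y k ω i; μ] ≤
      2 * ∑ l ∈ Ico k (k + n), ∑ m ∈ range l, σM (l - 1 - m) ^ 2 := by
    have hn : n ≠ 0 := i.pos.ne'
    have hy_apply : (fun ω => y k ω i) = fun ω => ∑ r ∈ range n, s (σ^[k + r] i) +
        (∑ t ∈ range (k + n - 1), (X (t, σ^[k - 1 - t] i) - X (t, σ^[k + n - 1 - t] i))) ω := by
      ext ω
      simp only [hy, hx, Finset.sum_apply, Pi.sub_apply, X]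
      exact σ.sum_range_trajectory_apply s (β · ω) k hn i
    rw [hy_apply, variance_const_add (aestronglyMeasurable_sum _ fun t _ =>
      ((hL2 _ _).sub (hL2 _ _)).aestronglyMeasurable)]
    calc _ ≤ ∑ t ∈ range (k + n - 1), 2 * σM t ^ 2 :=
          (variance_sum_sub_le (fun p => hL2 p.1 p.2) hindep _ _ _).trans <| sum_le_sum fun t _ => by
            linarith [hvar t (σ^[k - 1 - t] i), hvar t (σ^[k + n - 1 - t] i)]
      _ ≤ _ := by
        rw [← mul_sum]
        gcongr
        exact sum_range_le_sum_Ico_sum_range (fun t => sq_nonneg _) k hn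
  calc ∑ i, Var[fun ω => y k ω i; μ]
      ≤ ∑ _i : Fin n, 2 * ∑ l ∈ Ico k (k + n), ∑ m ∈ range l, σM (l - 1 - m) ^ 2 :=
        sum_le_sum fun i _ => hcoord i
    _ = _ := by rw [sum_const, card_univ, Fintype.card_fin, nsmul_eq_mul]; ring

theorem trace_cov_of_estimator {Ω : Type*} [MeasurableSpace Ω]
    (μ : Measure Ω) [IsProbabilityMeasure μ] (n : ℕ) (hn : 2 ≤ n)
    (A : Matrix (Fin n) (Fin n) ℝ)
    (hA : ∀ i j, A i j = if (i : ℕ) = ((j : ℕ) + 1) % n then 1 else 0)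
    (s : Fin n → ℝ) (β : ℕ → Ω → Fin n → ℝ) (σM : ℕ → ℝ)
    (hL2 : ∀ k i, MemLp (fun ω => β k ω i) 2 μ)
    (hmean : ∀ k i, ∫ ω, β k ω i ∂μ = 0)
    (hvar : ∀ k i, variance (fun ω => β k ω i) μ ≤ (σM k) ^ 2)
    (hindep : iIndepFun
      (fun (p : ℕ × Fin n) ω => β p.1 ω p.2) μ)
    (x : ℕ → Ω → Fin n → ℝ)
    (hx : ∀ k ω, x k ω = (A ^ k).mulVec s
      + ∑ m ∈ Finset.range k, ((A ^ m) * (1 - A)).mulVec (β (k - 1 - m) ω))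
    (y : ℕ → Ω → Fin n → ℝ)
    (hy : ∀ k ω i, y k ω i = ∑ r ∈ Finset.range n, x (k + r) ω i) :
    ∀ k : ℕ, ∑ i, variance (fun ω => y k ω i) μ
      ≤ 2 * n * ∑ l ∈ Finset.Ico k (k + n),
          ∑ m ∈ Finset.range l, (σM (l - 1 - m)) ^ 2 :=
  trace_cov_of_estimator_general μ n A hA s β σM hL2 hvar hindep x hx y hy
end
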